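/- Let m ≥ 1 and let s_1, …, s_m be nonzero integers. Consider the homogeneous linear Diophantine system Ax = 0 in the variables x = (y_1,…,y_m,z_1,…,z_{m−1}) ∈ ℕ_0^{2m−1} given by the equations s_1 y_1 − z_1 = 0, s_l y_l + z_{l−1} − z_l = 0 for l ∈ [2,m−1], and s_m y_m + z_{m−1} = 0 (equivalently, z_l = Σ_{j=1}^{l} s_j y_j for all l ∈ [1,m−1] and Σ_{j=1}^{m} s_j y_j = 0). Then the set S_A^min of minimal solutions with minimal carrier consists exactly of the vectors x^{(i,j)} indexed by pairs i < j with s_i > 0 and s_j < 0, defined by y_i = −s_j/g, y_j = s_i/g where g = gcd(s_i, −s_j), y_l = 0 for l ∉ {i,j}, z_l = s_i·(−s_j)/g for l ∈ [i, j−1], and z_l = 0 otherwise. -/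

import Mathlib

namespace Periodic

/-- An arc of a static graph: a source node, a target node, and a shift. -/
structure Arc (n : ℕ) where
  src : Fin n
  tgt : Fin n
  shift : ℤ
deriving DecidableEq

/-- A static graph on `n` nodes, given by three matrices with entries in `ℚ ∪ {-∞}`. -/
structure StaticGraph (n : ℕ) where
  Mneg : Matrix (Fin n) (Fin n) (WithBot ℚ)
  Mzero : Matrix (Fin n) (Fin n) (WithBot ℚ)
  Mpos : Matrix (Fin n) (Fin n) (WithBot ℚ)

/-- The matrix associated to shift `s` (the all `-∞` matrix if `s ∉ {-1,0,1}`). -/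
def StaticGraph.M {n : ℕ} (G : StaticGraph n) (s : ℤ) : Matrix (Fin n) (Fin n) (WithBot ℚ) :=
  if s = -1 then G.Mneg else if s = 0 then G.Mzero else if s = 1 then G.Mpos
  else Matrix.of fun _ _ => ⊥

/-- `e` is an arc of `G` iff the corresponding matrix entry is not `-∞`. -/
def StaticGraph.IsArc {n : ℕ} (G : StaticGraph n) (e : Arc n) : Prop :=
  G.M e.shift e.tgt e.src ≠ ⊥

/-- The (rational) weight of an arc. -/
def StaticGraph.w {n : ℕ} (G : StaticGraph n) (e : Arc n) : ℚ :=
  WithBot.unbotD 0 (G.M e.shift e.tgt e.src)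

/-- A path in the static graph `G`: a first node together with a compatible list of arcs. -/
structure SPath {n : ℕ} (G : StaticGraph n) where
  first : Fin n
  arcs : List (Arc n)
  valid : ∀ e ∈ arcs, G.IsArc e
  startOk : ∀ e ∈ arcs.head?, e.src = first
  chainOk : arcs.Chain' (fun e f => e.tgt = f.src)

namespace SPath

variable {n : ℕ} {G : StaticGraph n}

/-- The last node of a path. -/
def last (p : SPath G) : Fin n := (p.arcs.getLast?).elim p.first Arc.tgt

/-- The length of a path. -/
def len (p : SPath G) : ℕ := p.arcs.length

/-- The shift of a path. -/
def shift (p : SPath G) : ℤ := (p.arcs.map Arc.shift).sum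

/-- The weight of a path. -/
def weight (p : SPath G) : ℚ := (p.arcs.map G.w).sum

/-- The sum of the shifts of the first `i` arcs of a path. -/
def prefixShift (p : SPath G) (i : ℕ) : ℤ := ((p.arcs.take i).map Arc.shift).sum

/-- The left-shift of a path: the minimum of all prefix sums of arc shifts. -/
def lshift (p : SPath G) : ℤ :=
  Finset.univ.inf' Finset.univ_nonempty
    (fun i : Fin (p.arcs.length + 1) => p.prefixShift i)

/-- A path is a circuit if its first and last nodes coincide. -/
def IsCircuit (p : SPath G) : Prop := p.first = p.last

/-- The sequence of nodes visited by a path. -/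
def nodes (p : SPath G) : List (Fin n) := p.first :: p.arcs.map Arc.tgt

/-- An elementary circuit: a nonempty circuit whose nodes, except the last one,
are pairwise distinct. -/
def IsElemCircuit (p : SPath G) : Prop :=
  p.IsCircuit ∧ p.arcs ≠ [] ∧ p.nodes.dropLast.Nodup

/-- Concatenation of two paths with matching endpoints. -/
def append (p q : SPath G) (h : q.first = p.last) : SPath G where
  first := p.first
  arcs := p.arcs ++ q.arcs
  valid := by
    intro e he
    rcases List.mem_append.mp he with h' | h'
    · exact p.valid e h'
    · exact q.valid e h'
  startOk := by
    intro e he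
    cases hp : p.arcs with
    | nil =>
      rw [hp] at he
      simp only [List.nil_append] at he
      rw [q.startOk e he, h]
      simp [SPath.last, hp]
    | cons a l =>
      rw [hp] at he
      simp only [List.cons_append, List.head?_cons, Option.mem_def, Option.some.injEq] at he
      subst he
      exact p.startOk a (by rw [hp]; rfl)
  chainOk := by
    apply List.IsChain.append p.chainOk q.chainOk
    intro x hx y hy
    have h1 : y.src = q.first := q.startOk y hy
    have hx' : p.arcs.getLast? = some x := hx
    have h2 : p.last = x.tgt := by simp [SPath.last, hx']
    show x.tgt = y.src
    rw [h1, h, h2]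

theorem last_append (p q : SPath G) (h : q.first = p.last) :
    (p.append q h).last = q.last := by
  cases hq : q.arcs with
  | nil =>
    have hql : q.last = q.first := by simp [SPath.last, hq]
    simp [SPath.append, SPath.last, hq, hql, h]
  | cons a l =>
    have hx : (a :: l).getLast? = some ((a :: l).getLast (by simp)) :=
      List.getLast?_eq_some_getLast (by simp)
    simp [SPath.append, SPath.last, hq, List.getLast?_append, hx]

/-- The empty path at node `i`. -/
def nil (G : StaticGraph n) (i : Fin n) : SPath G :=
  ⟨i, [], by simp, by simp, List.isChain_nil⟩

/-- Auxiliary construction for powers of a circuit. -/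
def npowAux (q : SPath G) (h : q.IsCircuit) :
    (x : ℕ) → {r : SPath G // r.first = q.first ∧ r.last = q.first}
  | 0 => ⟨SPath.nil G q.first, rfl, by simp [SPath.last, SPath.nil]⟩
  | x + 1 =>
    let r := npowAux q h x
    ⟨q.append r.1 (r.2.1.trans h), rfl, (last_append q r.1 _).trans r.2.2⟩

/-- The `x`-fold concatenation `q^x` of a circuit `q` with itself. -/
def npow (q : SPath G) (h : q.IsCircuit) (x : ℕ) : SPath G := (npowAux q h x).1

theorem npow_first (q : SPath G) (h : q.IsCircuit) (x : ℕ) :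
    (npow q h x).first = q.first := (npowAux q h x).2.1

theorem npow_last (q : SPath G) (h : q.IsCircuit) (x : ℕ) :
    (npow q h x).last = q.first := (npowAux q h x).2.2

/-- Concatenation of a nonempty list of paths with matching endpoints. -/
def concatChain (p : SPath G) :
    (l : List (SPath G)) → (p :: l).Chain' (fun a b => b.first = a.last) →
      {r : SPath G // r.first = p.first}
  | [], _ => ⟨p, rfl⟩
  | q :: l, h =>
    let rest := concatChain q l (List.isChain_cons.mp h).2
    ⟨p.append rest.1 (rest.2.trans ((List.isChain_cons.mp h).1 q rfl)), rfl⟩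

/-- The path `p`, started at shift `k`, visits only shifts belonging to `S`;
i.e., `(p, k)` represents a path of the `S`-periodic graph `G_S`. -/
def shiftsIn (p : SPath G) (k : ℤ) (S : Set ℤ) : Prop :=
  ∀ i ≤ p.arcs.length, k + p.prefixShift i ∈ S

end SPath

/-- The set of positive integers (the paper's `ℕ`). -/
def Spos : Set ℤ := {k | 0 < k}

/-- The set of integers `k` with `-n ≤ k ≤ n`. -/
def Sint (n : ℕ) : Set ℤ := {k | -(n : ℤ) ≤ k ∧ k ≤ (n : ℤ)}

/-- The `S`-periodic graph `G_S` contains an `∞`-weight path: there are nodes `u, v` of `G_S`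
and an infinite sequence of paths of `G_S` from `u` to `v` with strictly increasing weights. -/
def HasInfWeightPath {n : ℕ} (G : StaticGraph n) (S : Set ℤ) : Prop :=
  ∃ u v : Fin n × ℤ, ∃ (p : ℕ → SPath G) (k : ℕ → ℤ),
    (∀ h, (p h).shiftsIn (k h) S) ∧
    (∀ h, ((p h).first, k h) = u ∧ ((p h).last, k h + (p h).shift) = v) ∧
    ∀ h, (p h).weight < (p (h + 1)).weight

/-- The `S`-periodic graph `G_S` contains a circuit with positive weight. -/
def HasPosWeightCircuit {n : ℕ} (G : StaticGraph n) (S : Set ℤ) : Prop :=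
  ∃ (p : SPath G) (k : ℤ), p.shiftsIn k S ∧ p.IsCircuit ∧ p.shift = 0 ∧ 0 < p.weight

end Periodic

namespace Periodic

variable {n : ℕ} {G : StaticGraph n}

/-- The inner nodes of a path: all visited nodes except the first and the last one. -/
def SPath.innerNodes (p : SPath G) : List (Fin n) := (p.nodes.drop 1).dropLast

/-- `p` splits as the concatenation `u q v`. -/
def Splits (p u q v : SPath G) : Prop :=
  p.first = u.first ∧ p.arcs = u.arcs ++ (q.arcs ++ v.arcs) ∧
    q.first = u.last ∧ v.first = q.last

/-- The elementary circuit `q` can be cut out of `p = u q v`: all of its inner nodes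
occur somewhere else in the remaining path `u v`. -/
def Removable (p u q v : SPath G) : Prop :=
  Splits p u q v ∧ q.IsElemCircuit ∧
    ∀ x ∈ q.innerNodes, x ∈ u.nodes ∨ x ∈ v.nodes

/-- One step of the decomposition: cut the removable elementary circuit `q` out of `p`,
obtaining `p₂`. -/
def CutStep (p p₂ q : SPath G) : Prop :=
  ∃ u v, Removable p u q v ∧ p₂.first = u.first ∧ p₂.arcs = u.arcs ++ v.arcs

/-- `IsCPD p p' Q` : `(p', Q)` is a complete path decomposition of `p`, where the
multiset `Q` records the removed elementary circuits with their multiplicities. -/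
inductive IsCPD : SPath G → SPath G → Multiset (SPath G) → Prop
  | done (p : SPath G) (h : ∀ u q v, ¬ Removable p u q v) : IsCPD p p 0
  | step (p p₂ p' q : SPath G) (Q : Multiset (SPath G)) :
      CutStep p p₂ q → IsCPD p₂ p' Q → IsCPD p p' (q ::ₘ Q)

/-- Assumption A: all circuits of the decomposition have nonzero shift, and no two distinct
circuits have both the same source node and the same shift. -/
def AssumptionA (Q : Multiset (SPath G)) : Prop :=
  (∀ q ∈ Q, q.shift ≠ 0) ∧
    ∀ q ∈ Q, ∀ r ∈ Q, q ≠ r → (q.first, q.shift) ≠ (r.first, r.shift)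

/-- `ps` is a factorization of the path `p` into consecutive subpaths. -/
def IsFactorization (p : SPath G) (ps : List (SPath G)) : Prop :=
  ps ≠ [] ∧ ps.Chain' (fun a b => b.first = a.last) ∧
    (∀ q ∈ ps.head?, q.first = p.first) ∧ p.arcs = (ps.map SPath.arcs).flatten

/-- One move of the canonical-path-composition algorithm: a factor which is a circuit with
negative shift is postponed, or a factor which is a circuit with positive shift is
anticipated. -/
inductive MoveStep : List (SPath G) → List (SPath G) → Prop
  | postpone (a b d : List (SPath G)) (c : SPath G) (hc : c.IsCircuit) (hs : c.shift < 0) :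
      MoveStep (a ++ c :: (b ++ d)) (a ++ (b ++ c :: d))
  | anticipate (a b d : List (SPath G)) (c : SPath G) (hc : c.IsCircuit) (hs : 0 < c.shift) :
      MoveStep (a ++ (b ++ c :: d)) (a ++ c :: (b ++ d))

/-- Weights of pseudo-circuits of `G_S` from node `(i, 0)` to node `(i, s)`. -/
def PCWeights (G : StaticGraph n) (S : Set ℤ) (i : Fin n) (s : ℤ) : Set ℚ :=
  {w | ∃ p : SPath G, p.shiftsIn 0 S ∧ p.first = i ∧ p.last = i ∧ p.shift = s ∧ p.weight = w}

/-- The path `r^{(h)} = q₁^{(-s₂)·h} p' q₂^{s₁·h}`. -/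
def rpath (q₁ p' q₂ : SPath G)
    (hc₁ : q₁.IsCircuit) (hc₂ : q₂.IsCircuit)
    (h₁ : p'.first = q₁.last) (h₂ : q₂.first = p'.last) (h : ℕ) : SPath G :=
  (SPath.npow q₁ hc₁ ((-q₂.shift).toNat * h)).append
    (p'.append (SPath.npow q₂ hc₂ (q₁.shift.toNat * h))
      ((SPath.npow_first q₂ hc₂ _).trans h₂))
    ((h₁.trans hc₁.symm).trans (SPath.npow_last q₁ hc₁ _).symm)

/-- `x` is a nonzero solution in `S` which is minimal (componentwise) and has minimal
carrier among nonzero solutions. -/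
def isMinSol {ι : Type*} (S : Set (ι → ℕ)) (x : ι → ℕ) : Prop :=
  x ∈ S ∧ x ≠ 0 ∧
    ∀ y ∈ S, y ≠ x → y ≠ 0 → ¬ y ≤ x ∧ ¬ ({i | y i ≠ 0} ⊂ {i | x i ≠ 0})

/-- Solutions `(y, z) ∈ ℕ₀^m × ℕ₀^(m-1)` of the Diophantine system
`z_l = ∑_{j ≤ l} s_j y_j` (for `l ∈ [1, m-1]`) and `∑_j s_j y_j = 0`. -/
def DioSol (m : ℕ) (s : Fin m → ℤ) : Set (Fin m ⊕ Fin (m - 1) → ℕ) :=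
  {x | (∀ l : Fin (m - 1), (x (Sum.inr l) : ℤ) =
          ∑ j ∈ Finset.univ.filter (fun j : Fin m => (j : ℕ) ≤ (l : ℕ)),
            s j * (x (Sum.inl j) : ℤ)) ∧
       (∑ j : Fin m, s j * (x (Sum.inl j) : ℤ)) = 0}

/-- The candidate minimal solution `x^{(i,j)}`: `y_i = -s_j/g`, `y_j = s_i/g`,
`z_l = s_i·(-s_j)/g` for `l ∈ [i, j-1]`, all other entries `0`, where `g = gcd(s_i, -s_j)`. -/
def dioMinVec (m : ℕ) (s : Fin m → ℤ) (i j : Fin m) : Fin m ⊕ Fin (m - 1) → ℕ :=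
  fun l => match l with
  | Sum.inl a =>
      if a = i then (s j).natAbs / Int.gcd (s i) (s j)
      else if a = j then (s i).natAbs / Int.gcd (s i) (s j)
      else 0
  | Sum.inr a =>
      if (i : ℕ) ≤ (a : ℕ) ∧ (a : ℕ) < (j : ℕ)
      then (s i).natAbs * ((s j).natAbs / Int.gcd (s i) (s j))
      else 0

end Periodic

open Periodic Periodic.SPath

namespace Stmt11Aux
open Finset Periodic

variable {m : ℕ} {s : Fin m → ℤ}

lemma sum_two (s : Fin m → ℤ) {i j : Fin m} (hij : i ≠ j) (y : Fin m → ℕ)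
    (hy : ∀ k, k ≠ i → k ≠ j → y k = 0) (T : Finset (Fin m)) :
    ∑ k ∈ T, s k * (y k : ℤ) =
      (if i ∈ T then s i * (y i : ℤ) else 0) + (if j ∈ T then s j * (y j : ℤ) else 0) := by
  have h : ∀ k ∈ T, s k * (y k : ℤ) =
      (if k = i then s i * (y i : ℤ) else 0) + (if k = j then s j * (y j : ℤ) else 0) := by
    intro k _
    by_cases h1 : k = i
    · subst h1; simp [hij]
    · by_cases h2 : k = j
      · subst h2; simp [h1]
      · simp [h1, h2, hy k h1 h2]
  rw [Finset.sum_congr rfl h, Finset.sum_add_distrib,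
    Finset.sum_ite_eq' T i, Finset.sum_ite_eq' T j]

lemma gcd_comm_mul (a b : ℕ) : a * (b / Nat.gcd a b) = b * (a / Nat.gcd a b) := by
  rw [← Nat.mul_div_assoc a (Nat.gcd_dvd_right a b), ← Nat.mul_div_assoc b (Nat.gcd_dvd_left a b),
    Nat.mul_comm a b]

lemma exists_scal {a b p q : ℕ} (ha : 0 < a) (hb : 0 < b) (h : a * p = b * q) :
    ∃ t, p = (b / Nat.gcd a b) * t ∧ q = (a / Nat.gcd a b) * t := by
  set g := Nat.gcd a b with hg
  have hg0 : 0 < g := Nat.gcd_pos_of_pos_left _ ha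
  have hco : Nat.Coprime (a / g) (b / g) := Nat.coprime_div_gcd_div_gcd hg0
  have ha' : g * (a / g) = a := Nat.mul_div_cancel' (Nat.gcd_dvd_left a b)
  have hb' : g * (b / g) = b := Nat.mul_div_cancel' (Nat.gcd_dvd_right a b)
  have h2 : (a / g) * p = (b / g) * q := by
    have h3 : g * ((a/g) * p) = g * ((b/g) * q) := by
      rw [← mul_assoc, ha', ← mul_assoc, hb']; exact h
    exact Nat.eq_of_mul_eq_mul_left hg0 h3
  have hbg0 : 0 < b / g := Nat.div_pos (Nat.le_of_dvd hb (Nat.gcd_dvd_right a b)) hg0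
  have hdvd : (b / g) ∣ p := by
    have hd : (b / g) ∣ (a / g) * p := ⟨q, h2⟩
    exact Nat.Coprime.dvd_of_dvd_mul_left hco.symm hd
  obtain ⟨t, ht⟩ := hdvd
  refine ⟨t, ht, ?_⟩
  have h4 : (b/g) * ((a/g) * t) = (b/g) * q := by rw [← h2, ht]; ring
  exact (Nat.eq_of_mul_eq_mul_left hbg0 h4).symm

section IJ

variable {i j : Fin m} (hij : (i:ℕ) < (j:ℕ)) (hsi : 0 < s i) (hsj : s j < 0)

lemma cast_a (hsi : 0 < s i) : (((s i).natAbs : ℕ) : ℤ) = s i := Int.natAbs_of_nonneg hsi.le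

lemma cast_b (hsj : s j < 0) : (((s j).natAbs : ℕ) : ℤ) = -(s j) :=
  Int.ofNat_natAbs_of_nonpos hsj.le

lemma key_cancel (hsi : 0 < s i) (hsj : s j < 0) :
    s i * (((s j).natAbs / Int.gcd (s i) (s j) : ℕ) : ℤ)
      + s j * (((s i).natAbs / Int.gcd (s i) (s j) : ℕ) : ℤ) = 0 := by
  have hsa := cast_a hsi
  have hsb := cast_b hsj
  set a := (s i).natAbs with hA
  set b := (s j).natAbs with hB
  have hgc : Int.gcd (s i) (s j) = Nat.gcd a b := rfl
  have hmul : a * (b / Nat.gcd a b) = b * (a / Nat.gcd a b) := gcd_comm_mul a b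
  have h2 : (a : ℤ) * ((b / Nat.gcd a b : ℕ) : ℤ) = (b:ℤ) * ((a / Nat.gcd a b : ℕ):ℤ) := by
    exact_mod_cast congrArg (fun n : ℕ => (n:ℤ)) hmul
  have hsj' : s j = -(b:ℤ) := by omega
  rw [hgc, ← hsa, hsj']
  linarith [h2]

lemma wsupp (k : Fin m) (h1 : k ≠ i) (h2 : k ≠ j) : dioMinVec m s i j (Sum.inl k) = 0 := by
  show (if k = i then (s j).natAbs / Int.gcd (s i) (s j)
    else if k = j then (s i).natAbs / Int.gcd (s i) (s j) else 0) = 0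
  rw [if_neg h1, if_neg h2]

lemma wz (l : Fin (m-1)) (h : ¬ ((i:ℕ) ≤ (l:ℕ) ∧ (l:ℕ) < (j:ℕ))) :
    dioMinVec m s i j (Sum.inr l) = 0 := by
  show (if (i : ℕ) ≤ (l : ℕ) ∧ (l : ℕ) < (j : ℕ)
    then (s i).natAbs * ((s j).natAbs / Int.gcd (s i) (s j)) else 0) = 0
  rw [if_neg h]

lemma wzpos (l : Fin (m-1)) (h : (i:ℕ) ≤ (l:ℕ) ∧ (l:ℕ) < (j:ℕ)) :
    dioMinVec m s i j (Sum.inr l) =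
      (s i).natAbs * ((s j).natAbs / Int.gcd (s i) (s j)) := by
  show (if (i : ℕ) ≤ (l : ℕ) ∧ (l : ℕ) < (j : ℕ)
    then (s i).natAbs * ((s j).natAbs / Int.gcd (s i) (s j)) else 0) = _
  rw [if_pos h]

lemma wi : dioMinVec m s i j (Sum.inl i) = (s j).natAbs / Int.gcd (s i) (s j) := by
  show (if i = i then (s j).natAbs / Int.gcd (s i) (s j)
    else if i = j then (s i).natAbs / Int.gcd (s i) (s j) else 0) = _
  rw [if_pos rfl]

lemma wj (hij : (i:ℕ) < (j:ℕ)) :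
    dioMinVec m s i j (Sum.inl j) = (s i).natAbs / Int.gcd (s i) (s j) := by
  have hne : j ≠ i := by intro h; rw [h] at hij; omega
  show (if j = i then (s j).natAbs / Int.gcd (s i) (s j)
    else if j = j then (s i).natAbs / Int.gcd (s i) (s j) else 0) = _
  rw [if_neg hne, if_pos rfl]

lemma wipos (hsi : 0 < s i) (hsj : s j < 0) : 0 < dioMinVec m s i j (Sum.inl i) := by
  rw [wi]
  have ha : 0 < (s i).natAbs := Int.natAbs_pos.mpr hsi.ne'
  have hb : 0 < (s j).natAbs := Int.natAbs_pos.mpr hsj.ne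
  have hg0 : 0 < Nat.gcd (s i).natAbs (s j).natAbs := Nat.gcd_pos_of_pos_left _ ha
  exact Nat.div_pos (Nat.le_of_dvd hb (Nat.gcd_dvd_right _ _)) hg0

lemma minvec_mem (hij : (i:ℕ) < (j:ℕ)) (hsi : 0 < s i) (hsj : s j < 0) :
    dioMinVec m s i j ∈ DioSol m s := by
  have hij' : i ≠ j := by intro h; rw [h] at hij; omega
  have hsum := sum_two s hij' (fun k => dioMinVec m s i j (Sum.inl k))
    (fun k h1 h2 => wsupp k h1 h2)
  have hcan := key_cancel hsi hsj
  have hsa := cast_a hsi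
  constructor
  · intro l
    rw [hsum]
    simp only [Finset.mem_filter, Finset.mem_univ, true_and]
    by_cases hi1 : (i:ℕ) ≤ (l:ℕ)
    · by_cases hj1 : (j:ℕ) ≤ (l:ℕ)
      · rw [if_pos hi1, if_pos hj1, wz l (by omega), wi, wj hij]
        simpa using hcan.symm
      · rw [if_pos hi1, if_neg hj1, wzpos l ⟨hi1, by omega⟩, wi, add_zero,
          Nat.cast_mul, hsa]
    · rw [if_neg hi1, if_neg (by omega : ¬ (j:ℕ) ≤ (l:ℕ)), wz l (by omega)]
      simp
  · rw [hsum]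
    simp only [Finset.mem_univ, if_pos]
    rw [wi, wj hij]
    exact hcan

lemma eq_mul_of_support (hij : (i:ℕ) < (j:ℕ)) (hsi : 0 < s i) (hsj : s j < 0)
    {x : Fin m ⊕ Fin (m-1) → ℕ} (hx : x ∈ DioSol m s)
    (hsupp : ∀ k, k ≠ i → k ≠ j → x (Sum.inl k) = 0) :
    ∃ t, ∀ k, x k = t * dioMinVec m s i j k := by
  have hij' : i ≠ j := by intro h; rw [h] at hij; omega
  obtain ⟨h1, h2⟩ := hx
  have hsum := sum_two s hij' (fun k => x (Sum.inl k)) hsupp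
  have hsa := cast_a hsi
  have hsb := cast_b hsj
  have hgc : Int.gcd (s i) (s j) = Nat.gcd (s i).natAbs (s j).natAbs := rfl
  rw [hsum] at h2
  simp only [Finset.mem_univ, if_pos] at h2
  have hab : (s i).natAbs * x (Sum.inl i) = (s j).natAbs * x (Sum.inl j) := by
    have hcast : ((s i).natAbs : ℤ) * (x (Sum.inl i) : ℤ)
        = ((s j).natAbs : ℤ) * (x (Sum.inl j) : ℤ) := by
      rw [hsa, hsb]; linarith [h2]
    exact_mod_cast hcast
  have ha : 0 < (s i).natAbs := Int.natAbs_pos.mpr hsi.ne'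
  have hb : 0 < (s j).natAbs := Int.natAbs_pos.mpr hsj.ne
  obtain ⟨t, hxi, hxj⟩ := exists_scal ha hb hab
  refine ⟨t, ?_⟩
  intro k
  rcases k with k | l
  · by_cases hk1 : k = i
    · subst hk1; rw [wi, hgc, hxi]; exact Nat.mul_comm _ _
    · by_cases hk2 : k = j
      · subst hk2; rw [wj hij, hgc, hxj]; exact Nat.mul_comm _ _
      · rw [hsupp k hk1 hk2, wsupp k hk1 hk2, Nat.mul_zero]
  · have hl := h1 l
    rw [hsum] at hl
    simp only [Finset.mem_filter, Finset.mem_univ, true_and] at hl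
    by_cases hi1 : (i:ℕ) ≤ (l:ℕ)
    · by_cases hj1 : (j:ℕ) ≤ (l:ℕ)
      · rw [if_pos hi1, if_pos hj1, h2] at hl
        rw [wz l (by omega), Nat.mul_zero]
        exact_mod_cast hl
      · rw [if_pos hi1, if_neg hj1, add_zero] at hl
        rw [wzpos l ⟨hi1, by omega⟩, hgc]
        have hcast : ((x (Sum.inr l) : ℕ) : ℤ) =
            ((t * ((s i).natAbs * ((s j).natAbs / Nat.gcd (s i).natAbs (s j).natAbs)) : ℕ) : ℤ) := by
          rw [hl, hxi, Nat.cast_mul, Nat.cast_mul, Nat.cast_mul, hsa]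
          ring
        exact_mod_cast hcast
    · rw [if_neg hi1, if_neg (by omega : ¬ (j:ℕ) ≤ (l:ℕ)), add_zero] at hl
      rw [wz l (by omega), Nat.mul_zero]
      exact_mod_cast hl

lemma minvec_min (hij : (i:ℕ) < (j:ℕ)) (hsi : 0 < s i) (hsj : s j < 0) :
    isMinSol (DioSol m s) (dioMinVec m s i j) := by
  set w := dioMinVec m s i j with hw
  have hmem := minvec_mem hij hsi hsj
  have hne0 : w ≠ 0 := by
    intro h
    have := congrFun h (Sum.inl i)
    have hpos := wipos (s := s) (i := i) (j := j) hsi hsj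
    rw [← hw] at hpos
    simp only [Pi.zero_apply] at this
    omega
  refine ⟨hmem, hne0, ?_⟩
  intro y hy hyne hy0
  constructor
  · intro hle
    rw [Pi.le_def] at hle
    have hsupp : ∀ k, k ≠ i → k ≠ j → y (Sum.inl k) = 0 := by
      intro k h1 h2
      have := hle (Sum.inl k)
      rw [hw, wsupp k h1 h2] at this
      omega
    obtain ⟨t, ht⟩ := eq_mul_of_support hij hsi hsj hy hsupp
    have ht0 : t ≠ 0 := by
      rintro rfl
      exact hy0 (funext fun k => by simp [ht k])
    have hge : ∀ k, w k ≤ y k := fun k => by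
      rw [ht k, ← hw]
      exact Nat.le_mul_of_pos_left _ (Nat.pos_of_ne_zero ht0)
    exact hyne (funext fun k => le_antisymm (hle k) (hge k))
  · intro hss
    have hsupp : ∀ k, k ≠ i → k ≠ j → y (Sum.inl k) = 0 := by
      intro k h1 h2
      by_contra hne
      have hmm : Sum.inl k ∈ {i | y i ≠ 0} := hne
      have := hss.1 hmm
      simp only [Set.mem_setOf_eq, hw] at this
      exact this (wsupp k h1 h2)
    obtain ⟨t, ht⟩ := eq_mul_of_support hij hsi hsj hy hsupp
    have ht0 : t ≠ 0 := by
      rintro rfl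
      exact hy0 (funext fun k => by simp [ht k])
    apply hss.2
    intro k hk
    simp only [Set.mem_setOf_eq] at hk ⊢
    rw [ht k, ← hw]
    exact Nat.mul_ne_zero ht0 hk

lemma forward (hs : ∀ k, s k ≠ 0) {x : Fin m ⊕ Fin (m-1) → ℕ}
    (hmin : isMinSol (DioSol m s) x) :
    ∃ i j : Fin m, (i:ℕ) < (j:ℕ) ∧ 0 < s i ∧ s j < 0 ∧ x = dioMinVec m s i j := by
  obtain ⟨hmem, hx0, hminP⟩ := hmin
  obtain ⟨h1, h2⟩ := hmem
  set Y : Finset (Fin m) := Finset.univ.filter (fun k => x (Sum.inl k) ≠ 0) with hY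
  have hYne : Y.Nonempty := by
    rw [Finset.nonempty_iff_ne_empty]
    intro hemp
    apply hx0
    have hy0 : ∀ k, x (Sum.inl k) = 0 := by
      intro k
      by_contra hk
      have hkY : k ∈ Y := by simp [hY, hk]
      rw [hemp] at hkY
      exact absurd hkY (Finset.notMem_empty k)
    funext k
    rcases k with k | l
    · exact hy0 k
    · have hz : (x (Sum.inr l) : ℤ) = 0 := by
        rw [h1 l]
        apply Finset.sum_eq_zero
        intro k _
        rw [hy0 k]
        simp
      exact_mod_cast hz
  set i := Y.min' hYne with hi
  set j := Y.max' hYne with hj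
  have hiY : i ∈ Y := Y.min'_mem hYne
  have hjY : j ∈ Y := Y.max'_mem hYne
  have hyi : x (Sum.inl i) ≠ 0 := (Finset.mem_filter.mp hiY).2
  have hyj : x (Sum.inl j) ≠ 0 := (Finset.mem_filter.mp hjY).2
  have hbound : ∀ k, x (Sum.inl k) ≠ 0 → (i:ℕ) ≤ (k:ℕ) ∧ (k:ℕ) ≤ (j:ℕ) := by
    intro k hk
    have hkY : k ∈ Y := by simp [hY, hk]
    exact ⟨Y.min'_le k hkY, Y.le_max' k hkY⟩
  have hzero : ∀ k : Fin m, ((k:ℕ) < (i:ℕ) ∨ (j:ℕ) < (k:ℕ)) → x (Sum.inl k) = 0 := by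
    intro k hk
    by_contra h
    obtain ⟨hl', hr'⟩ := hbound k h
    omega
  have hij' : i ≠ j := by
    intro hije
    have hone : ∑ k : Fin m, s k * (x (Sum.inl k) : ℤ) = s i * (x (Sum.inl i) : ℤ) := by
      apply Finset.sum_eq_single i
      · intro k _ hk
        have hk0 : x (Sum.inl k) = 0 := by
          by_contra hcon
          obtain ⟨hl', hr'⟩ := hbound k hcon
          have hje : (j:ℕ) = (i:ℕ) := by rw [hije]
          exact hk (Fin.ext (by omega))
        rw [hk0]; simp
      · intro h; exact absurd (Finset.mem_univ i) h
    rw [hone] at h2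
    rcases mul_eq_zero.mp h2 with h | h
    · exact hs i h
    · exact hyi (by exact_mod_cast h)
  have hijlt : (i:ℕ) < (j:ℕ) := by
    have hle : (i:ℕ) ≤ (j:ℕ) := Y.min'_le j hjY
    have hne : (i:ℕ) ≠ (j:ℕ) := fun h => hij' (Fin.ext h)
    omega
  have hsipos : 0 < s i := by
    have hlv : (i:ℕ) < m - 1 := by have := j.isLt; omega
    have hl := h1 ⟨(i:ℕ), hlv⟩
    have hsum : ∑ k ∈ Finset.univ.filter
          (fun k : Fin m => (k:ℕ) ≤ ((⟨(i:ℕ), hlv⟩ : Fin (m-1)):ℕ)),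
          s k * (x (Sum.inl k) : ℤ) = s i * (x (Sum.inl i) : ℤ) := by
      apply Finset.sum_eq_single i
      · intro k hkmem hk
        have hkl : (k:ℕ) ≤ (i:ℕ) := by simpa using hkmem
        have hne : (k:ℕ) ≠ (i:ℕ) := fun h => hk (Fin.ext h)
        rw [hzero k (Or.inl (by omega))]
        simp
      · intro h
        exact absurd (by simp : i ∈ _) h
    rw [hsum] at hl
    rcases lt_trichotomy (s i) 0 with h | h | h
    · exfalso
      have hxi : (0:ℤ) < (x (Sum.inl i) : ℤ) := by
        exact_mod_cast Nat.pos_of_ne_zero hyi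
      have hneg : s i * (x (Sum.inl i) : ℤ) < 0 := mul_neg_of_neg_of_pos h hxi
      have hnn : (0:ℤ) ≤ ((x (Sum.inr ⟨(i:ℕ), hlv⟩) : ℕ) : ℤ) := Int.natCast_nonneg _
      omega
    · exact absurd h (hs i)
    · exact h
  have hsjneg : s j < 0 := by
    have hj1 : 1 ≤ (j:ℕ) := by omega
    have hlv : (j:ℕ) - 1 < m - 1 := by have := j.isLt; omega
    have hl := h1 ⟨(j:ℕ)-1, hlv⟩
    have hsplit := Finset.sum_filter_add_sum_filter_not Finset.univ
      (fun k : Fin m => (k:ℕ) ≤ ((⟨(j:ℕ)-1, hlv⟩ : Fin (m-1)):ℕ))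
      (fun k => s k * (x (Sum.inl k) : ℤ))
    have hrest : ∑ k ∈ Finset.univ.filter
          (fun k : Fin m => ¬ (k:ℕ) ≤ ((⟨(j:ℕ)-1, hlv⟩ : Fin (m-1)):ℕ)),
          s k * (x (Sum.inl k):ℤ) = s j * (x (Sum.inl j) : ℤ) := by
      apply Finset.sum_eq_single j
      · intro k hkmem hk
        have hgt : ¬ (k:ℕ) ≤ (j:ℕ) - 1 := by simpa using hkmem
        have hne : (k:ℕ) ≠ (j:ℕ) := fun h => hk (Fin.ext h)
        rw [hzero k (Or.inr (by omega))]
        simp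
      · intro h
        exact absurd (by simp; omega : j ∈ _) h
    rw [hrest, ← hl] at hsplit
    rw [h2] at hsplit
    rcases lt_trichotomy (s j) 0 with h | h | h
    · exact h
    · exact absurd h (hs j)
    · exfalso
      have hxj : (0:ℤ) < (x (Sum.inl j) : ℤ) := by
        exact_mod_cast Nat.pos_of_ne_zero hyj
      have hpos : 0 < s j * (x (Sum.inl j) : ℤ) := mul_pos h hxj
      have hnn : (0:ℤ) ≤ ((x (Sum.inr ⟨(j:ℕ)-1, hlv⟩) : ℕ) : ℤ) := Int.natCast_nonneg _
      rw [hl] at hnn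
      omega
  have hzpos : ∀ l : Fin (m-1), (i:ℕ) ≤ (l:ℕ) → (l:ℕ) < (j:ℕ) → x (Sum.inr l) ≠ 0 := by
    intro l hil hlj hzl
    set x' : Fin m ⊕ Fin (m-1) → ℕ := fun k => match k with
      | Sum.inl k => if (k:ℕ) ≤ (l:ℕ) then x (Sum.inl k) else 0
      | Sum.inr r => if (r:ℕ) ≤ (l:ℕ) then x (Sum.inr r) else 0 with hx'
    have hsumx' : ∀ T : Finset (Fin m),
        ∑ k ∈ T, s k * (x' (Sum.inl k) : ℤ)
          = ∑ k ∈ T.filter (fun k : Fin m => (k:ℕ) ≤ (l:ℕ)), s k * (x (Sum.inl k) : ℤ) := by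
      intro T
      rw [Finset.sum_filter]
      apply Finset.sum_congr rfl
      intro k _
      show s k * ((if (k:ℕ) ≤ (l:ℕ) then x (Sum.inl k) else 0 : ℕ) : ℤ) = _
      split_ifs <;> simp
    have hx'mem : x' ∈ DioSol m s := by
      constructor
      · intro r
        show ((if (r:ℕ) ≤ (l:ℕ) then x (Sum.inr r) else 0 : ℕ) : ℤ) = _
        rw [hsumx']
        by_cases hr : (r:ℕ) ≤ (l:ℕ)
        · rw [if_pos hr, h1 r]
          congr 1
          rw [Finset.filter_filter]
          apply Finset.filter_congr
          intro k _
          exact ⟨fun hh => ⟨hh, by omega⟩, fun hh => hh.1⟩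
        · rw [if_neg hr]
          rw [Finset.filter_filter]
          have hfeq : Finset.univ.filter (fun k : Fin m => (k:ℕ) ≤ (r:ℕ) ∧ (k:ℕ) ≤ (l:ℕ))
              = Finset.univ.filter (fun k : Fin m => (k:ℕ) ≤ (l:ℕ)) := by
            apply Finset.filter_congr
            intro k _
            exact ⟨fun hh => hh.2, fun hh => ⟨by omega, hh⟩⟩
          rw [hfeq, ← h1 l, hzl]
      · rw [show (Finset.univ : Finset (Fin m)) = Finset.univ from rfl, hsumx' Finset.univ,
          ← h1 l, hzl]
        simp
    have hle' : x' ≤ x := by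
      rw [Pi.le_def]
      intro k
      rcases k with k | r
      · show (if (k:ℕ) ≤ (l:ℕ) then x (Sum.inl k) else 0) ≤ _
        split_ifs
        · exact le_rfl
        · exact Nat.zero_le _
      · show (if (r:ℕ) ≤ (l:ℕ) then x (Sum.inr r) else 0) ≤ _
        split_ifs
        · exact le_rfl
        · exact Nat.zero_le _
    have hne0' : x' ≠ 0 := by
      intro h
      have hc := congrFun h (Sum.inl i)
      have : (if (i:ℕ) ≤ (l:ℕ) then x (Sum.inl i) else 0) = 0 := hc
      rw [if_pos hil] at this
      exact hyi this
    have hnex : x' ≠ x := by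
      intro h
      have hc := congrFun h (Sum.inl j)
      have : (if (j:ℕ) ≤ (l:ℕ) then x (Sum.inl j) else 0) = x (Sum.inl j) := hc
      rw [if_neg (by omega)] at this
      exact hyj this.symm
    exact (hminP x' hx'mem hnex hne0').1 hle'
  refine ⟨i, j, hijlt, hsipos, hsjneg, ?_⟩
  by_contra hne
  have hwmem := minvec_mem hijlt hsipos hsjneg
  have hw0 : dioMinVec m s i j ≠ 0 := by
    intro h
    have hc := congrFun h (Sum.inl i)
    have hpos := wipos (s := s) (j := j) hsipos hsjneg
    simp only [Pi.zero_apply] at hc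
    omega
  obtain ⟨hnle, hnss⟩ := hminP _ hwmem (fun h => hne h.symm) hw0
  have hsub : {k | dioMinVec m s i j k ≠ 0} ⊆ {k | x k ≠ 0} := by
    intro k hk
    simp only [Set.mem_setOf_eq] at hk ⊢
    rcases k with k | l
    · by_cases hk1 : k = i
      · subst hk1; exact hyi
      · by_cases hk2 : k = j
        · subst hk2; exact hyj
        · exact absurd (wsupp k hk1 hk2) hk
    · by_cases hc : (i:ℕ) ≤ (l:ℕ) ∧ (l:ℕ) < (j:ℕ)
      · exact hzpos l hc.1 hc.2
      · exact absurd (wz l hc) hk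
  have hsub' : {k | x k ≠ 0} ⊆ {k | dioMinVec m s i j k ≠ 0} := by
    by_contra hns
    exact hnss (by rw [Set.ssubset_def]; exact ⟨hsub, hns⟩)
  have hsupp : ∀ k, k ≠ i → k ≠ j → x (Sum.inl k) = 0 := by
    intro k hk1 hk2
    by_contra h
    exact (hsub' h) (wsupp k hk1 hk2)
  obtain ⟨t, ht⟩ := eq_mul_of_support hijlt hsipos hsjneg ⟨h1, h2⟩ hsupp
  have ht0 : t ≠ 0 := by
    rintro rfl
    exact hx0 (funext fun k => by simp [ht k])
  apply hnle
  rw [Pi.le_def]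
  intro k
  rw [ht k]
  exact Nat.le_mul_of_pos_left _ (Nat.pos_of_ne_zero ht0)

end IJ

end Stmt11Aux


theorem stmt11 (m : ℕ) (hm : 1 ≤ m) (s : Fin m → ℤ) (hs : ∀ j, s j ≠ 0) :
    {x | isMinSol (DioSol m s) x} =
      {x | ∃ i j : Fin m, (i : ℕ) < (j : ℕ) ∧ 0 < s i ∧ s j < 0 ∧
            x = dioMinVec m s i j} := by
  ext x
  simp only [Set.mem_setOf_eq]
  constructor
  · intro hmin
    exact Stmt11Aux.forward hs hmin
  · rintro ⟨i, j, hij, hsi, hsj, rfl⟩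
    exact Stmt11Aux.minvec_min hij hsi hsj
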